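/- In the polynomial ring 𝔽₅[t₁,…,t₁₀][x₁₂,x₁₃,x₁₄,x₁₅,x₂₃,x₂₄,x₂₅,x₃₄,x₃₅,x₄₅], let Q = t₁x₁₄x₄₅ + t₂x₂₄² + t₃x₂₃x₂₅ + t₄x₂₃x₃₄ + t₅x₁₄x₁₅ + t₆x₁₂x₂₄ + t₇x₁₃x₂₃ + t₈x₃₅x₄₅ + t₉x₁₂² + t₁₀x₁₅x₃₅. At the point of 𝔽₅[t₁,…,t₁₀]¹⁰ with x₁₃ = t₄, x₃₄ = −t₇ and all other coordinates equal to 0: Q vanishes, all five Plücker quadrics q₁,…,q₅ vanish, and all ten partial derivatives ∂Q/∂x_{ij} vanish. (Hence this point of ℙ⁹ is a singular point of Gr(2,5) ∩ {Q = 0} over 𝔽₅(t₁,…,t₁₀).) -/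

import Mathlib

noncomputable section

open MvPolynomial

/-- The coefficient ring `𝔽₅[t₁,…,t₁₀]`. -/
abbrev R17 : Type := MvPolynomial (Fin 10) (ZMod 5)

/-- The parameter `tᵢ`, viewed as a constant in
`𝔽₅[t₁,…,t₁₀][x₁₂,x₁₃,x₁₄,x₁₅,x₂₃,x₂₄,x₂₅,x₃₄,x₃₅,x₄₅]`
(the ten Plücker variables are indexed `0,…,9` in the displayed order). -/
def T17 (i : Fin 10) : MvPolynomial (Fin 10) R17 := C (X i)

/-- `Q = t₁x₁₄x₄₅ + t₂x₂₄² + t₃x₂₃x₂₅ + t₄x₂₃x₃₄ + t₅x₁₄x₁₅ + t₆x₁₂x₂₄ + t₇x₁₃x₂₃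
  + t₈x₃₅x₄₅ + t₉x₁₂² + t₁₀x₁₅x₃₅`. -/
def Q17 : MvPolynomial (Fin 10) R17 :=
  T17 0 * (X 2 * X 9) + T17 1 * (X 5 * X 5) + T17 2 * (X 4 * X 6) + T17 3 * (X 4 * X 7) +
  T17 4 * (X 2 * X 3) + T17 5 * (X 0 * X 5) + T17 6 * (X 1 * X 4) + T17 7 * (X 8 * X 9) +
  T17 8 * (X 0 * X 0) + T17 9 * (X 3 * X 8)

/-- The five Plücker quadrics `q₁,…,q₅` in the variables
`x₁₂,x₁₃,x₁₄,x₁₅,x₂₃,x₂₄,x₂₅,x₃₄,x₃₅,x₄₅` (indexed `0,…,9`). -/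
def plucker17 : Fin 5 → MvPolynomial (Fin 10) R17 :=
  ![X 4 * X 9 - X 5 * X 8 + X 6 * X 7,
    X 1 * X 9 - X 2 * X 8 + X 3 * X 7,
    X 0 * X 9 - X 2 * X 6 + X 3 * X 5,
    X 0 * X 8 - X 1 * X 6 + X 3 * X 4,
    X 0 * X 7 - X 1 * X 5 + X 2 * X 4]

/-- The point with `x₁₃ = t₄`, `x₃₄ = −t₇` and all other coordinates zero. -/
def pt17 : Fin 10 → R17 :=
  ![0, X 3, 0, 0, 0, 0, 0, -(X 6), 0, 0]

@[simp] lemma eval_T17 (p : Fin 10 → R17) (i : Fin 10) : eval p (T17 i) = X i :=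
  eval_C _

lemma eval_pt17_Q17 : eval pt17 Q17 = 0 := by
  simp [Q17, pt17]

/-- `pt17` is the decomposable vector `e₃ ∧ (−t₄e₁ − t₇e₄)`. -/
lemma eval_pt17_plucker17 (j : Fin 5) : eval pt17 (plucker17 j) = 0 := by
  fin_cases j <;> simp [plucker17, pt17]

/-- Only the monomials `t₇x₁₃x₂₃` and `t₄x₂₃x₃₄` of `Q17` involve a coordinate that is nonzero at
`pt17`, and their other factor is `x₂₃`, so only `∂Q/∂x₂₃` can survive. -/
lemma eval_pt17_pderiv_Q17_of_ne {i : Fin 10} (hi : i ≠ 4) : eval pt17 (pderiv i Q17) = 0 := by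
  fin_cases i <;> simp_all [Q17, pt17, pderiv_X]

lemma pderiv_four_Q17 : pderiv 4 Q17 = T17 2 * X 6 + T17 3 * X 7 + T17 6 * X 1 := by
  simp [Q17, T17, pderiv_X]

/-- The coordinates `x₁₃ = t₄`, `x₃₄ = −t₇` are chosen so that `t₄x₃₄ + t₇x₁₃` cancels. -/
lemma eval_pt17_pderiv_four_Q17 : eval pt17 (pderiv 4 Q17) = 0 := by
  simp only [pderiv_four_Q17, map_add, map_mul, eval_T17, eval_X, pt17, Matrix.cons_val]
  ring

/-- At the point `x₁₃ = t₄`, `x₃₄ = −t₇` (all other coordinates `0`), the quadric `Q`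
of family (4) for `p = 5` vanishes, all five Plücker quadrics vanish, and all ten partial
derivatives of `Q` vanish: this point is a singular point of `Gr(2,5) ∩ {Q = 0}`. -/
theorem family4_p5_singular_point :
    eval pt17 Q17 = 0 ∧
    (∀ j : Fin 5, eval pt17 (plucker17 j) = 0) ∧
    (∀ i : Fin 10, eval pt17 (pderiv i Q17) = 0) := by
  refine ⟨eval_pt17_Q17, eval_pt17_plucker17, fun i => ?_⟩
  rcases eq_or_ne i 4 with rfl | hi
  · exact eval_pt17_pderiv_four_Q17
  · exact eval_pt17_pderiv_Q17_of_ne hi
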